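/- arXiv:1303.4133 — 2 statements merged into one kernel-verified Lean document; each statement's English description precedes it below -/
import Mathlib

section
/- Let N and M be triangulated subcategories of a triangulated category T, and assume that the ordered pair (M, N) or the ordered pair (N, M) is factorizable in T. Then the canonical functor M/(N ∩ M) → T/N induced by the inclusion M ↪ T on Verdier quotients is fully faithful, and likewise the canonical functor N/(N ∩ M) → T/M is fully faithful. -/
open CategoryTheory CategoryTheory.Limits CategoryTheory.Pretriangulated

universe w v u v₂ u₂ v₃ u₃ v₄ u₄ v₅ u₅ v₆ u₆

structure IsTriangulatedSub {C : Type u} [Category.{v} C] [HasZeroObject C] [HasShift C ℤ]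
    [Preadditive C] [∀ n : ℤ, (shiftFunctor C n).Additive] [Pretriangulated C]
    (P : C → Prop) : Prop where
  iso_closed : ∀ ⦃x y : C⦄, (x ≅ y) → P x → P y
  zero : ∀ x : C, IsZero x → P x
  shift : ∀ (x : C) (n : ℤ), P x → P (x⟦n⟧)
  two_of_three₁₂ : ∀ T ∈ distTriang C, P T.obj₁ → P T.obj₂ → P T.obj₃
  two_of_three₂₃ : ∀ T ∈ distTriang C, P T.obj₂ → P T.obj₃ → P T.obj₁
  two_of_three₁₃ : ∀ T ∈ distTriang C, P T.obj₁ → P T.obj₃ → P T.obj₂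

def IsSummandClosed {C : Type u} [Category.{v} C] [Preadditive C]
    [HasBinaryBiproducts C] (P : C → Prop) : Prop :=
  ∀ x y : C, P (x ⊞ y) → P x ∧ P y

def coneIn {C : Type u} [Category.{v} C] [HasZeroObject C] [HasShift C ℤ]
    [Preadditive C] [∀ n : ℤ, (shiftFunctor C n).Additive] [Pretriangulated C]
    (P : C → Prop) : MorphismProperty C :=
  fun X Y f => ∃ (Z : C) (g : Y ⟶ Z) (h : Z ⟶ X⟦(1 : ℤ)⟧),
    (Triangle.mk f g h ∈ distTriang C) ∧ P Z


/-- The ordered pair of subcategories `(P, P')` is *factorizable* if every morphism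
from an object of `P` to an object of `P'` factors through an object of `P ∩ P'`. -/
def Factorizable {C : Type u} [Category.{v} C] (P P' : C → Prop) : Prop :=
  ∀ (x y : C) (f : x ⟶ y), P x → P' y →
    ∃ (z : C) (a : x ⟶ z) (b : z ⟶ y), (P z ∧ P' z) ∧ a ≫ b = f

/-!
Factorizability is Verdier's localizing condition: `Factorizable N M` says that `M` is right
`N`-localizing and `Factorizable M N` that it is left `N`-localizing. In the left case every
`s : X ⟶ Y` with cone in `N` and `Y ∈ M` has a multiple `a ≫ s : Z ⟶ Y` with `Z ∈ M` and cone in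
`N ∩ M`, so the fractions computing `Hom` in `T/N` between objects of `M` can be taken in
`M/(N ∩ M)`; this is Verdier's Proposition II.2.3.5, available as
`ObjectProperty.IsVerdierLeftLocalizing.fullyFaithful` (and its right-handed dual). The second
functor is the first one with `N` and `M` exchanged.
-/

section

variable {C : Type u} [Category.{v} C]

lemma factorizable_iff_isVerdierLeftLocalizing (A B : ObjectProperty C) :
    Factorizable A B ↔ A.IsVerdierLeftLocalizing B :=
  ⟨fun h => ⟨fun f hX hY => by
      obtain ⟨Z, a, b, ⟨hA, hB⟩, fac⟩ := h _ _ f hX hY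
      exact ⟨Z, a, b, hA, hB, fac⟩⟩,
    fun h _ _ f hX hY => by
      obtain ⟨Z, a, b, hA, hB, fac⟩ := h.fac f hX hY
      exact ⟨Z, a, b, ⟨hA, hB⟩, fac⟩⟩

lemma factorizable_iff_isVerdierRightLocalizing (A B : ObjectProperty C) :
    Factorizable B A ↔ A.IsVerdierRightLocalizing B :=
  ⟨fun h => ⟨fun f hX hY => by
      obtain ⟨Z, a, b, ⟨hB, hA⟩, fac⟩ := h _ _ f hX hY
      exact ⟨Z, a, b, hA, hB, fac⟩⟩,
    fun h _ _ f hX hY => by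
      obtain ⟨Z, a, b, hA, hB, fac⟩ := h.fac f hX hY
      exact ⟨Z, a, b, ⟨hB, hA⟩, fac⟩⟩

variable [HasZeroObject C] [HasShift C ℤ] [Preadditive C] [∀ n : ℤ, (shiftFunctor C n).Additive]
  [Pretriangulated C]

namespace IsTriangulatedSub

variable {P : ObjectProperty C}

lemma isClosedUnderIsomorphisms (hP : IsTriangulatedSub P) : P.IsClosedUnderIsomorphisms :=
  ⟨fun e h => hP.iso_closed e h⟩

lemma isTriangulated (hP : IsTriangulatedSub P) : P.IsTriangulated :=
  have := hP.isClosedUnderIsomorphisms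
  { exists_zero := HasZeroObject.zero.imp fun Z hZ => ⟨hZ, hP.zero Z hZ⟩
    isStableUnderShiftBy := fun a => ⟨fun x hx => hP.shift x a hx⟩
    toIsTriangulatedClosed₂ := .mk' hP.two_of_three₁₃ }

end IsTriangulatedSub

lemma coneIn_eq_trW (P : ObjectProperty C) : coneIn P = P.trW := by
  ext X Y f
  exact ⟨fun ⟨Z, g, h, hT, hZ⟩ => ⟨Z, g, h, hT, hZ⟩, fun ⟨Z, g, h, hT, hZ⟩ => ⟨Z, g, h, hT, hZ⟩⟩

lemma coneIn_inf_inverseImage_ι (A B : ObjectProperty C) [A.IsTriangulated] :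
    (coneIn (A ⊓ B)).inverseImage A.ι = (B.inverseImage A.ι).trW := by
  ext X Y f
  rw [ObjectProperty.trW_inverseImage_ι_iff, ← coneIn_eq_trW]
  rfl

theorem full_and_faithful_of_factorizable [IsTriangulated C] {A B : ObjectProperty C}
    (hA : IsTriangulatedSub A) (hB : IsTriangulatedSub B)
    (hfac : Factorizable A B ∨ Factorizable B A)
    {D₁ : Type u₂} [Category.{v₂} D₁] (Q₁ : A.FullSubcategory ⥤ D₁)
    [Q₁.IsLocalization ((coneIn (A ⊓ B)).inverseImage A.ι)]
    {D₂ : Type u₃} [Category.{v₃} D₂] (Q₂ : C ⥤ D₂) [Q₂.IsLocalization (coneIn B)]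
    (F : D₁ ⥤ D₂) (e : Q₁ ⋙ F ≅ A.ι ⋙ Q₂) :
    F.Full ∧ F.Faithful := by
  have := hA.isTriangulated
  have := hB.isTriangulated
  have := hB.isClosedUnderIsomorphisms
  have : Q₁.IsLocalization (B.inverseImage A.ι).trW := coneIn_inf_inverseImage_ι A B ▸ ‹_›
  have : Q₂.IsLocalization B.trW := coneIn_eq_trW B ▸ ‹_›
  rcases hfac with hfac | hfac
  · have := (factorizable_iff_isVerdierLeftLocalizing A B).1 hfac
    have hF := ObjectProperty.IsVerdierLeftLocalizing.fullyFaithful A B e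
    exact ⟨hF.full, hF.faithful⟩
  · have := (factorizable_iff_isVerdierRightLocalizing A B).1 hfac
    have hF := ObjectProperty.IsVerdierRightLocalizing.fullyFaithful A B e
    exact ⟨hF.full, hF.faithful⟩

end

/-- Here `M/(N ∩ M)` is modelled by a localization `Q₁` of the full subcategory `M` at the
morphisms whose cone (computed in `C`) lies in `N ∩ M`, `C/N` by a localization `Q₂`
of `C` at the morphisms with cone in `N`, and the canonical functor by any functor `F`
with `Q₁ ⋙ F ≅ (M ↪ C) ⋙ Q₂`; similarly for the other quotient. -/
theorem canonical_functor_between_quotients_fully_faithful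
    {C : Type u} [Category.{v} C] [HasZeroObject C] [HasShift C ℤ] [Preadditive C]
    [∀ n : ℤ, (shiftFunctor C n).Additive] [Pretriangulated C] [IsTriangulated C]
    (N M : C → Prop) (hN : IsTriangulatedSub N) (hM : IsTriangulatedSub M)
    (hfac : Factorizable M N ∨ Factorizable N M)
    {D₁ : Type u₂} [Category.{v₂} D₁] (Q₁ : ObjectProperty.FullSubcategory M ⥤ D₁)
    [Q₁.IsLocalization ((coneIn (fun z => N z ∧ M z)).inverseImage
      (ObjectProperty.ι M))]
    {D₂ : Type u₃} [Category.{v₃} D₂] (Q₂ : C ⥤ D₂) [Q₂.IsLocalization (coneIn N)]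
    (F : D₁ ⥤ D₂) (hF : Nonempty (Q₁ ⋙ F ≅ ObjectProperty.ι M ⋙ Q₂))
    {D₃ : Type u₄} [Category.{v₄} D₃] (Q₃ : ObjectProperty.FullSubcategory N ⥤ D₃)
    [Q₃.IsLocalization ((coneIn (fun z => N z ∧ M z)).inverseImage
      (ObjectProperty.ι N))]
    {D₄ : Type u₅} [Category.{v₅} D₄] (Q₄ : C ⥤ D₄) [Q₄.IsLocalization (coneIn M)]
    (G : D₃ ⥤ D₄) (hG : Nonempty (Q₃ ⋙ G ≅ ObjectProperty.ι N ⋙ Q₄)) :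
    (F.Full ∧ F.Faithful) ∧ (G.Full ∧ G.Faithful) := by
  obtain ⟨eF⟩ := hF
  obtain ⟨eG⟩ := hG
  have : Q₁.IsLocalization ((coneIn (M ⊓ N)).inverseImage (ObjectProperty.ι M)) :=
    inf_comm N M ▸ ‹_›
  exact ⟨full_and_faithful_of_factorizable hM hN hfac Q₁ Q₂ F eF,
    full_and_faithful_of_factorizable hN hM hfac.symm Q₃ Q₄ G eG⟩
end

section
/- Let N and M be triangulated subcategories of an essentially small triangulated category T and Q : T → T/N the Verdier quotient functor. Then the smallest thick subcategory N ∨_thi M of T containing both N and M equals the thick closure of the preimage Q^{-1}(im(Q|_M)), where im(Q|_M) is the smallest triangulated subcategory of T/N containing Q(m) for all objects m of M, Q^{-1} denotes the preimage full subcategory, and the thick closure is the smallest thick subcategory containing a given full subcategory. -/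
open CategoryTheory CategoryTheory.Limits CategoryTheory.Pretriangulated

universe w v u v₂ u₂ v₃ u₃ v₄ u₄ v₅ u₅ v₆ u₆

/-- The triangulated closure of a family `S` of objects: the smallest triangulated
subcategory containing `S`, realized as the intersection of all triangulated
subcategories containing `S`. -/
def triClosure {C : Type u} [Category.{v} C] [HasZeroObject C] [HasShift C ℤ]
    [Preadditive C] [∀ n : ℤ, (shiftFunctor C n).Additive] [Pretriangulated C]
    (S : C → Prop) : C → Prop :=
  fun x => ∀ P : C → Prop, IsTriangulatedSub P → (∀ z, S z → P z) → P x

/-- The thick closure of a family `S` of objects: the smallest thick subcategory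
containing `S`, realized as the intersection of all thick subcategories containing
`S`. -/
def thickClosure {C : Type u} [Category.{v} C] [HasZeroObject C] [HasShift C ℤ]
    [Preadditive C] [∀ n : ℤ, (shiftFunctor C n).Additive] [Pretriangulated C]
    [HasBinaryBiproducts C] (S : C → Prop) : C → Prop :=
  fun x => ∀ P : C → Prop, IsTriangulatedSub P → IsSummandClosed P →
    (∀ z, S z → P z) → P x

/-! Both sides are thick subcategories containing `N`, and the point is that a thick
subcategory `P ⊇ N` is saturated for the Verdier quotient `Q : C ⥤ C/N`: if `Q x ≅ Q z` with
`z ∈ P`, then `x ∈ P`. Objects killed by `Q` lie in `P`, because `Q c = 0` forces a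
triangle `c → Z → E` with zero first map and `E ∈ N`, so `c⟦1⟧` is a summand of `E`; an
isomorphism `Q x ≅ Q z` is a left fraction whose cones are killed by `Q`. Saturation also
makes the essential image of `P` under `Q` a triangulated subcategory of `C/N`, which
therefore contains `im (Q|_M)` as soon as `M ⊆ P`. -/

section

open ZeroObject

variable {C : Type u} [Category.{v} C] [HasZeroObject C] [HasShift C ℤ] [Preadditive C]
  [∀ n : ℤ, (shiftFunctor C n).Additive] [Pretriangulated C]

lemma triClosure_of_mem {S : C → Prop} {x : C} (hx : S x) : triClosure S x :=
  fun _ _ hSP => hSP x hx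

lemma triClosure_of_isZero (S : C → Prop) {x : C} (hx : IsZero x) : triClosure S x :=
  fun _ hP _ => hP.zero x hx

lemma thickClosure_mono [HasBinaryBiproducts C] {S S' : C → Prop} (h : ∀ z, S z → S' z)
    {x : C} (hx : thickClosure S x) : thickClosure S' x :=
  fun P hP hPs hS'P => hx P hP hPs fun z hz => hS'P z (h z hz)

lemma coneIn_eq_trW_s14 (N : C → Prop) : coneIn N = ObjectProperty.trW N := by
  ext X Y f
  exact ⟨fun ⟨Z, g, h, hT, hZ⟩ => ⟨Z, g, h, hT, hZ⟩, fun ⟨Z, g, h, hT, hZ⟩ => ⟨Z, g, h, hT, hZ⟩⟩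

lemma isZero_obj_of_mem {N : C → Prop} {D : Type u₂} [Category.{v₂} D] [HasZeroMorphisms D]
    (Q : C ⥤ D) [Q.IsLocalization (coneIn N)] [Q.PreservesZeroMorphisms] {z : C} (hz : N z) :
    IsZero (Q.obj z) := by
  have h₀ : coneIn N (0 : 0 ⟶ z) := ⟨z, 𝟙 z, 0, contractible_distinguished₁ z, hz⟩
  have := Localization.inverts Q (coneIn N) _ h₀
  exact (Q.map_isZero (isZero_zero C)).of_iso (asIso (Q.map (0 : 0 ⟶ z))).symm

namespace IsTriangulatedSub

variable {N P : C → Prop}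

lemma of_shift (hP : IsTriangulatedSub P) {x : C} (n : ℤ) (hx : P (x⟦n⟧)) : P x :=
  hP.iso_closed ((shiftFunctorCompIsoId C n (-n) (add_neg_cancel n)).app x) (hP.shift _ (-n) hx)

lemma mk' (iso_closed : ∀ ⦃x y : C⦄, (x ≅ y) → P x → P y)
    (zero : ∀ x : C, IsZero x → P x) (shift : ∀ (x : C) (n : ℤ), P x → P (x⟦n⟧))
    (two_of_three₁₂ : ∀ T ∈ distTriang C, P T.obj₁ → P T.obj₂ → P T.obj₃) :
    IsTriangulatedSub P where
  iso_closed := iso_closed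
  zero := zero
  shift := shift
  two_of_three₁₂ := two_of_three₁₂
  two_of_three₂₃ T hT h₂ h₃ := iso_closed ((shiftFunctorCompIsoId C 1 (-1) rfl).app T.obj₁)
    (shift _ (-1) (two_of_three₁₂ _ (rot_of_distTriang _ hT) h₂ h₃))
  two_of_three₁₃ _ hT h₁ h₃ :=
    two_of_three₁₂ _ (inv_rot_of_distTriang _ hT) (shift _ (-1) h₃) h₁

lemma isTriangulated_s14 (hN : IsTriangulatedSub N) : ObjectProperty.IsTriangulated N where
  exists_zero := ⟨0, isZero_zero C, hN.zero 0 (isZero_zero C)⟩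
  isStableUnderShiftBy n := ⟨fun X hX => hN.shift X n hX⟩
  ext₂' T hT h₁ h₃ := ObjectProperty.le_isoClosure _ _ (hN.two_of_three₁₃ T hT h₁ h₃)

lemma hasLeftCalculusOfFractions_coneIn [IsTriangulated C] (hN : IsTriangulatedSub N) :
    (coneIn N).HasLeftCalculusOfFractions := by
  have := hN.isTriangulated_s14
  rw [coneIn_eq_trW_s14]
  infer_instance

/-- A distinguished triangle `X ⟶ Y ⟶ Z ⟶ X⟦1⟧` with zero first map splits: `Z ≅ Y ⊞ X⟦1⟧`. -/
lemma mem_obj₁_of_mor₁_eq_zero [HasBinaryBiproducts C] (hP : IsTriangulatedSub P)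
    (hPs : IsSummandClosed P) {T : Triangle C} (hT : T ∈ distTriang C) (h₁ : T.mor₁ = 0)
    (h₃ : P T.obj₃) : P T.obj₁ := by
  have hrot : T.rotate.mor₃ = 0 := by simp [h₁]; rfl
  obtain ⟨e, -, -⟩ := exists_iso_binaryBiproduct_of_distTriang _ (rot_of_distTriang _ hT) hrot
  exact hP.of_shift 1 (hPs _ _ (hP.iso_closed e h₃)).2

variable [IsTriangulated C] {D : Type u₂} [Category.{v₂} D] (Q : C ⥤ D)
  [Q.IsLocalization (coneIn N)]

lemma mem_of_isZero_obj [HasBinaryBiproducts C] (hP : IsTriangulatedSub P)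
    (hPs : IsSummandClosed P) (hN : IsTriangulatedSub N) (hNP : ∀ z, N z → P z) {c : C}
    (hc : IsZero (Q.obj c)) : P c := by
  have := hN.hasLeftCalculusOfFractions_coneIn
  obtain ⟨Z, s, ⟨E, g, h, hT, hE⟩, hs⟩ :=
    (MorphismProperty.map_eq_iff_postcomp Q (coneIn N) (𝟙 c) 0).1 (hc.eq_of_src _ _)
  obtain rfl : s = 0 := by simpa using hs
  exact hP.mem_obj₁_of_mor₁_eq_zero hPs hT rfl (hNP E hE)

variable [HasZeroObject D] [Preadditive D] [HasShift D ℤ] [∀ n : ℤ, (shiftFunctor D n).Additive]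
  [Pretriangulated D] [Q.CommShift ℤ] [Q.IsTriangulated]

lemma map_two_of_three₁₂ (hP : IsTriangulatedSub P) (hN : IsTriangulatedSub N)
    (hNP : ∀ z, N z → P z) (T : Triangle D) (hT : T ∈ distTriang D)
    (h₁ : ObjectProperty.map P Q T.obj₁) (h₂ : ObjectProperty.map P Q T.obj₂) :
    ObjectProperty.map P Q T.obj₃ := by
  have := hN.hasLeftCalculusOfFractions_coneIn
  obtain ⟨z₁, hz₁, ⟨e₁⟩⟩ := h₁
  obtain ⟨z₂, hz₂, ⟨e₂⟩⟩ := h₂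
  obtain ⟨φ, hφ⟩ := Localization.exists_leftFraction Q (coneIn N) (e₁.hom ≫ T.mor₁ ≫ e₂.inv)
  obtain ⟨E, g, h, hTE, hE⟩ := φ.hs
  obtain ⟨c, g', h', hTc⟩ := distinguished_cocone_triangle φ.f
  let e₂' := e₂.symm ≪≫ Localization.isoOfHom Q (coneIn N) φ.s φ.hs
  have comm : e₁.inv ≫ Q.map φ.f = T.mor₁ ≫ e₂'.hom := by
    rw [← φ.map_comp_map_s Q (Localization.inverts Q (coneIn N)), ← hφ]
    simp [e₂']
  obtain ⟨e, -, -⟩ := exists_iso_of_arrow_iso T (Q.mapTriangle.obj (Triangle.mk φ.f g' h')) hT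
    (Q.map_distinguished _ hTc) (Arrow.isoMk e₁.symm e₂' comm)
  have hY' : P φ.Y' := hP.two_of_three₁₃ _ hTE hz₂ (hNP E hE)
  exact ⟨c, hP.two_of_three₁₂ _ hTc hz₁ hY', ⟨(Triangle.π₃.mapIso e).symm⟩⟩

lemma map (hP : IsTriangulatedSub P) (hN : IsTriangulatedSub N) (hNP : ∀ z, N z → P z) :
    IsTriangulatedSub (ObjectProperty.map P Q) := by
  refine .mk' (fun _ _ e hx => (ObjectProperty.map P Q).prop_of_iso e hx)
    (fun y hy => ⟨0, hP.zero 0 (isZero_zero C), ⟨(Q.map_isZero (isZero_zero C)).iso hy⟩⟩)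
    ?_ (hP.map_two_of_three₁₂ Q hN hNP)
  rintro y n ⟨c, hc, ⟨e⟩⟩
  exact ⟨c⟦n⟧, hP.shift c n hc, ⟨(Q.commShiftIso n).app c ≪≫ (shiftFunctor D n).mapIso e⟩⟩

variable [HasBinaryBiproducts C]

lemma mem_of_isIso_map (hP : IsTriangulatedSub P) (hPs : IsSummandClosed P)
    (hN : IsTriangulatedSub N) (hNP : ∀ z, N z → P z) {x y : C} (f : x ⟶ y) [IsIso (Q.map f)]
    (hy : P y) : P x := by
  obtain ⟨E, g, h, hT⟩ := distinguished_cocone_triangle f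
  have hE : IsZero (Q.obj E) := Triangle.isZero₃_of_isIso₁ _ (Q.map_distinguished _ hT) ‹_›
  exact hP.two_of_three₂₃ _ hT hy (hP.mem_of_isZero_obj Q hPs hN hNP hE)

lemma mem_of_iso_obj (hP : IsTriangulatedSub P) (hPs : IsSummandClosed P)
    (hN : IsTriangulatedSub N) (hNP : ∀ z, N z → P z) {x z : C} (e : Q.obj x ≅ Q.obj z)
    (hz : P z) : P x := by
  have := hN.hasLeftCalculusOfFractions_coneIn
  obtain ⟨φ, hφ⟩ := Localization.exists_leftFraction Q (coneIn N) e.hom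
  obtain ⟨E, g, h, hT, hE⟩ := φ.hs
  have : IsIso (Q.map φ.s) := Localization.inverts Q (coneIn N) _ φ.hs
  have : IsIso (Q.map φ.f) := by
    rw [← φ.map_comp_map_s Q (Localization.inverts Q (coneIn N)), ← hφ]
    infer_instance
  exact hP.mem_of_isIso_map Q hPs hN hNP φ.f (hP.two_of_three₁₃ _ hT hz (hNP E hE))

lemma mem_of_triClosure_obj (hP : IsTriangulatedSub P) (hPs : IsSummandClosed P)
    (hN : IsTriangulatedSub N) (hNP : ∀ z, N z → P z) {G : D → Prop}
    (hG : ∀ y, G y → ObjectProperty.map P Q y) {z : C} (hz : triClosure G (Q.obj z)) : P z := by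
  obtain ⟨c, hc, ⟨e⟩⟩ := hz _ (hP.map Q hN hNP) hG
  exact hP.mem_of_iso_obj Q hPs hN hNP e.symm hc

end IsTriangulatedSub

end

/-- Let `N` and `M` be triangulated subcategories of an essentially
small triangulated category `C` and `Q : C ⥤ D` the Verdier quotient of `C` by `N`.
Then the smallest thick subcategory `N ∨_thi M` containing `N` and `M` equals the
thick closure of the preimage `Q⁻¹(im (Q|_M))`, where `im (Q|_M)` is the smallest
triangulated subcategory of `D` containing `Q(m)` for all objects `m` of `M`. -/
theorem thick_join_eq_thickClosure_preimage_image
    {C : Type u} [Category.{v} C] [HasZeroObject C] [HasShift C ℤ] [Preadditive C]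
    [∀ n : ℤ, (shiftFunctor C n).Additive] [Pretriangulated C] [IsTriangulated C]
    [HasBinaryBiproducts C] [EssentiallySmall.{w} C]
    {D : Type u₂} [Category.{v₂} D] [HasZeroObject D] [HasShift D ℤ] [Preadditive D]
    [∀ n : ℤ, (shiftFunctor D n).Additive] [Pretriangulated D] [IsTriangulated D]
    (N M : C → Prop) (hN : IsTriangulatedSub N) (hM : IsTriangulatedSub M)
    (Q : C ⥤ D) [Q.CommShift ℤ] [Q.IsTriangulated] [Q.IsLocalization (coneIn N)] :
    ∀ x : C, thickClosure (fun z : C => N z ∨ M z) x ↔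
      thickClosure
        (fun z : C =>
          triClosure (fun y : D => ∃ m : C, M m ∧ Nonempty (y ≅ Q.obj m)) (Q.obj z)) x := by
  intro x
  constructor
  · refine thickClosure_mono fun z hz => ?_
    rcases hz with hz | hz
    · exact triClosure_of_isZero _ (isZero_obj_of_mem Q hz)
    · exact triClosure_of_mem ⟨z, hz, ⟨Iso.refl _⟩⟩
  · intro hx P hP hPs hNMP
    have hNP (z : C) (hz : N z) : P z := hNMP z (Or.inl hz)
    refine hx P hP hPs fun z hz => hP.mem_of_triClosure_obj Q hPs hN hNP ?_ hz
    rintro y ⟨m, hm, ⟨e⟩⟩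
    exact ⟨m, hNMP m (Or.inr hm), ⟨e.symm⟩⟩
end
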